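/- In L_excore, for propagators a₁, a₂ : P → Y and pure terms u₁, u₂ : X → P, setting f₁ = a₁ ∘ untag ∘ tag ∘ u₁ and f₂ = a₂ ∘ untag ∘ tag ∘ u₂ (catchers X → Y): the weak equation f₁ ∼ f₂ is T_excore-equivalent to the strong equation a₁ ∘ u₁ ≡ a₂ ∘ u₂, and the strong equation f₁ ≡ f₂ is T_excore-equivalent to the pair {a₁ ≡ a₂, a₁ ∘ u₁ ≡ a₂ ∘ u₂}. -/
import Mathlib


/-! The decorated logic for the core language for exceptions `L_excore`.
Types are elements of `Ty`, with a distinguished type `Par` of parameters and an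
empty type `Emp` (written `0` in the paper); `Sig` is a signature of pure operations.
`tag : Par → Emp` is a propagator and `untag : Emp → Par` is a catcher. -/

inductive CoTm (Ty : Type) (Par Emp : Ty) (Sig : Ty → Ty → Type) : Ty → Ty → Type where
  | id (X : Ty) : CoTm Ty Par Emp Sig X X
  | comp {X Y Z : Ty} (g : CoTm Ty Par Emp Sig Y Z) (f : CoTm Ty Par Emp Sig X Y) :
      CoTm Ty Par Emp Sig X Z
  | gen {X Y : Ty} (s : Sig X Y) : CoTm Ty Par Emp Sig X Y
  | fromEmpty (Y : Ty) : CoTm Ty Par Emp Sig Emp Y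
  | tag : CoTm Ty Par Emp Sig Par Emp
  | untag : CoTm Ty Par Emp Sig Emp Par

variable {Ty : Type} {Par Emp : Ty} {Sig : Ty → Ty → Type}

/-- The pure terms of `L_excore`. -/
inductive CoPure : ∀ {X Y : Ty}, CoTm Ty Par Emp Sig X Y → Prop where
  | id (X : Ty) : CoPure (CoTm.id X)
  | comp {X Y Z : Ty} {g : CoTm Ty Par Emp Sig Y Z} {f : CoTm Ty Par Emp Sig X Y} :
      CoPure g → CoPure f → CoPure (CoTm.comp g f)
  | gen {X Y : Ty} (s : Sig X Y) : CoPure (CoTm.gen (Par := Par) (Emp := Emp) s)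
  | fromEmpty (Y : Ty) : CoPure (CoTm.fromEmpty (Par := Par) (Sig := Sig) Y)

/-- The propagators of `L_excore`: terms not containing `untag`
(all terms are catchers). -/
inductive CoPpg : ∀ {X Y : Ty}, CoTm Ty Par Emp Sig X Y → Prop where
  | id (X : Ty) : CoPpg (CoTm.id X)
  | comp {X Y Z : Ty} {g : CoTm Ty Par Emp Sig Y Z} {f : CoTm Ty Par Emp Sig X Y} :
      CoPpg g → CoPpg f → CoPpg (CoTm.comp g f)
  | gen {X Y : Ty} (s : Sig X Y) : CoPpg (CoTm.gen (Par := Par) (Emp := Emp) s)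
  | fromEmpty (Y : Ty) : CoPpg (CoTm.fromEmpty (Par := Par) (Sig := Sig) Y)
  | tag : CoPpg (CoTm.tag (Sig := Sig))

/-- A decorated equation of `L_excore`: a pair of parallel terms together with a
`Bool` which is `true` for a strong equation `≡` and `false` for a weak equation `∼`. -/
def CoEqn (Ty : Type) (Par Emp : Ty) (Sig : Ty → Ty → Type) : Type :=
  Σ X : Ty, Σ Y : Ty, (CoTm Ty Par Emp Sig X Y × CoTm Ty Par Emp Sig X Y) × Bool

mutual
/-- Derivable strong equations of `L_excore` from the axiom set `Ax`. -/
inductive CoSEq (Ax : Set (CoEqn Ty Par Emp Sig)) :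
    ∀ {X Y : Ty}, CoTm Ty Par Emp Sig X Y → CoTm Ty Par Emp Sig X Y → Prop where
  | ax {X Y : Ty} {f g : CoTm Ty Par Emp Sig X Y} :
      (⟨X, Y, (f, g), true⟩ : CoEqn Ty Par Emp Sig) ∈ Ax → CoSEq Ax f g
  | refl {X Y : Ty} (f : CoTm Ty Par Emp Sig X Y) : CoSEq Ax f f
  | symm {X Y : Ty} {f g : CoTm Ty Par Emp Sig X Y} : CoSEq Ax f g → CoSEq Ax g f
  | trans {X Y : Ty} {f g h : CoTm Ty Par Emp Sig X Y} :
      CoSEq Ax f g → CoSEq Ax g h → CoSEq Ax f h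
  | subs {X Y Z : Ty} (u : CoTm Ty Par Emp Sig X Y) {v₁ v₂ : CoTm Ty Par Emp Sig Y Z} :
      CoSEq Ax v₁ v₂ → CoSEq Ax (v₁.comp u) (v₂.comp u)
  | repl {X Y Z : Ty} {v₁ v₂ : CoTm Ty Par Emp Sig X Y} (w : CoTm Ty Par Emp Sig Y Z) :
      CoSEq Ax v₁ v₂ → CoSEq Ax (w.comp v₁) (w.comp v₂)
  | idLeft {X Y : Ty} (f : CoTm Ty Par Emp Sig X Y) : CoSEq Ax ((CoTm.id Y).comp f) f
  | idRight {X Y : Ty} (f : CoTm Ty Par Emp Sig X Y) : CoSEq Ax (f.comp (CoTm.id X)) f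
  | assoc {W X Y Z : Ty} (h : CoTm Ty Par Emp Sig Y Z) (g : CoTm Ty Par Emp Sig X Y)
      (f : CoTm Ty Par Emp Sig W X) : CoSEq Ax ((h.comp g).comp f) (h.comp (g.comp f))
  -- (initial) of the pure sublogic `L_eqn`:
  | initialPure {Y : Ty} {u : CoTm Ty Par Emp Sig Emp Y} :
      CoPure u → CoSEq Ax u (CoTm.fromEmpty Y)
  -- (eq₁): a weak equation between propagators is strong
  | eq₁ {X Y : Ty} {f g : CoTm Ty Par Emp Sig X Y} :
      CoPpg f → CoPpg g → CoWEq Ax f g → CoSEq Ax f g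
  -- (eq₂)
  | eq₂ {X Y : Ty} {f g : CoTm Ty Par Emp Sig X Y} :
      CoWEq Ax f g → CoSEq Ax (f.comp (CoTm.fromEmpty X)) (g.comp (CoTm.fromEmpty X)) →
      CoSEq Ax f g
  -- (eq₃)
  | eq₃ {X : Ty} {f g : CoTm Ty Par Emp Sig Emp X} :
      CoWEq Ax (f.comp CoTm.tag) (g.comp CoTm.tag) → CoSEq Ax f g

/-- Derivable weak equations of `L_excore` from the axiom set `Ax`. -/
inductive CoWEq (Ax : Set (CoEqn Ty Par Emp Sig)) :
    ∀ {X Y : Ty}, CoTm Ty Par Emp Sig X Y → CoTm Ty Par Emp Sig X Y → Prop where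
  | ax {X Y : Ty} {f g : CoTm Ty Par Emp Sig X Y} :
      (⟨X, Y, (f, g), false⟩ : CoEqn Ty Par Emp Sig) ∈ Ax → CoWEq Ax f g
  | symm {X Y : Ty} {f g : CoTm Ty Par Emp Sig X Y} : CoWEq Ax f g → CoWEq Ax g f
  | trans {X Y : Ty} {f g h : CoTm Ty Par Emp Sig X Y} :
      CoWEq Ax f g → CoWEq Ax g h → CoWEq Ax f h
  -- (subs_∼): substitution only by pure terms
  | subsPure {X Y Z : Ty} {u : CoTm Ty Par Emp Sig X Y} {v₁ v₂ : CoTm Ty Par Emp Sig Y Z} :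
      CoPure u → CoWEq Ax v₁ v₂ → CoWEq Ax (v₁.comp u) (v₂.comp u)
  -- (repl_∼): replacement by arbitrary terms
  | repl {X Y Z : Ty} {v₁ v₂ : CoTm Ty Par Emp Sig X Y} (w : CoTm Ty Par Emp Sig Y Z) :
      CoWEq Ax v₁ v₂ → CoWEq Ax (w.comp v₁) (w.comp v₂)
  -- (empty_∼)
  | empty {Y : Ty} (f : CoTm Ty Par Emp Sig Emp Y) : CoWEq Ax f (CoTm.fromEmpty Y)
  -- (≡-to-∼)
  | ofStrong {X Y : Ty} {f g : CoTm Ty Par Emp Sig X Y} : CoSEq Ax f g → CoWEq Ax f g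
  -- (ax): untag ∘ tag ∼ id_P
  | untag_tag : CoWEq Ax ((CoTm.untag (Sig := Sig)).comp CoTm.tag) (CoTm.id Par)
end

/-- Two sets of decorated equations are `T_excore`-equivalent over `Ax` when they
generate the same theory (same strong and weak theorems) over `Ax`. -/
def CoEquiv (Ax E₁ E₂ : Set (CoEqn Ty Par Emp Sig)) : Prop :=
  ∀ (X Y : Ty) (f g : CoTm Ty Par Emp Sig X Y),
    (CoSEq (Ax ∪ E₁) f g ↔ CoSEq (Ax ∪ E₂) f g) ∧
    (CoWEq (Ax ∪ E₁) f g ↔ CoWEq (Ax ∪ E₂) f g)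

/-- `Ax` is a pure (strong) theory: all axioms are strong equations between pure terms. -/
def CoPureAx (Ax : Set (CoEqn Ty Par Emp Sig)) : Prop :=
  ∀ e ∈ Ax, CoPure e.2.2.1.1 ∧ CoPure e.2.2.1.2 ∧ e.2.2.2 = true

/-- Pure terms are propagators. -/
theorem pure_ppg {X Y : Ty} {f : CoTm Ty Par Emp Sig X Y} (h : CoPure f) : CoPpg f := by
  induction h with
  | id X => exact CoPpg.id X
  | comp _ _ ihg ihf => exact CoPpg.comp ihg ihf
  | gen s => exact CoPpg.gen s
  | fromEmpty Y => exact CoPpg.fromEmpty Y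

/-- Eliminate an equality of decorated equations. -/
theorem coeqn_eq_elim {X₁ Y₁ X₂ Y₂ : Ty}
    {p₁ : CoTm Ty Par Emp Sig X₁ Y₁ × CoTm Ty Par Emp Sig X₁ Y₁}
    {p₂ : CoTm Ty Par Emp Sig X₂ Y₂ × CoTm Ty Par Emp Sig X₂ Y₂} {b₁ b₂ : Bool}
    {C : ∀ {X Y : Ty}, (CoTm Ty Par Emp Sig X Y × CoTm Ty Par Emp Sig X Y) → Bool → Prop}
    (h : (⟨X₁, Y₁, (p₁, b₁)⟩ : CoEqn Ty Par Emp Sig) = ⟨X₂, Y₂, (p₂, b₂)⟩)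
    (hc : C p₂ b₂) : C p₁ b₁ := by
  injection h with h1 h2
  subst h1
  have h2 := eq_of_heq h2
  injection h2 with h3 h4
  subst h3
  have h4 := eq_of_heq h4
  injection h4 with h5 h6
  subst h5
  subst h6
  exact hc

theorem coSEq_mono {Ax₁ Ax₂ : Set (CoEqn Ty Par Emp Sig)}
    (hS : ∀ {X Y : Ty} {f g : CoTm Ty Par Emp Sig X Y},
      (⟨X, Y, (f, g), true⟩ : CoEqn Ty Par Emp Sig) ∈ Ax₁ → CoSEq Ax₂ f g)
    (hW : ∀ {X Y : Ty} {f g : CoTm Ty Par Emp Sig X Y},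
      (⟨X, Y, (f, g), false⟩ : CoEqn Ty Par Emp Sig) ∈ Ax₁ → CoWEq Ax₂ f g)
    {X Y : Ty} {f g : CoTm Ty Par Emp Sig X Y} (h : CoSEq Ax₁ f g) : CoSEq Ax₂ f g := by
  exact CoSEq.rec (motive_1 := fun {X Y} f g _ => CoSEq Ax₂ f g)
    (motive_2 := fun {X Y} f g _ => CoWEq Ax₂ f g)
    (@fun _ _ _ _ a => hS a)
    (@fun _ _ f => CoSEq.refl f)
    (@fun _ _ _ _ _ ih => ih.symm)
    (@fun _ _ _ _ _ _ _ ih1 ih2 => ih1.trans ih2)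
    (@fun _ _ _ u _ _ _ ih => CoSEq.subs u ih)
    (@fun _ _ _ _ _ w _ ih => CoSEq.repl w ih)
    (@fun _ _ f => CoSEq.idLeft f)
    (@fun _ _ f => CoSEq.idRight f)
    (@fun _ _ _ _ h3 g3 f3 => CoSEq.assoc h3 g3 f3)
    (@fun _ _ a => CoSEq.initialPure a)
    (@fun _ _ _ _ hf hg _ ih => CoSEq.eq₁ hf hg ih)
    (@fun _ _ _ _ _ _ ihw ihs => CoSEq.eq₂ ihw ihs)
    (@fun _ _ _ _ ih => CoSEq.eq₃ ih)
    (@fun _ _ _ _ a => hW a)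
    (@fun _ _ _ _ _ ih => ih.symm)
    (@fun _ _ _ _ _ _ _ ih1 ih2 => ih1.trans ih2)
    (@fun _ _ _ _ _ _ hu _ ih => CoWEq.subsPure hu ih)
    (@fun _ _ _ _ _ w _ ih => CoWEq.repl w ih)
    (@fun _ f => CoWEq.empty f)
    (@fun _ _ _ _ _ ih => CoWEq.ofStrong ih)
    CoWEq.untag_tag
    h

theorem coWEq_mono {Ax₁ Ax₂ : Set (CoEqn Ty Par Emp Sig)}
    (hS : ∀ {X Y : Ty} {f g : CoTm Ty Par Emp Sig X Y},
      (⟨X, Y, (f, g), true⟩ : CoEqn Ty Par Emp Sig) ∈ Ax₁ → CoSEq Ax₂ f g)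
    (hW : ∀ {X Y : Ty} {f g : CoTm Ty Par Emp Sig X Y},
      (⟨X, Y, (f, g), false⟩ : CoEqn Ty Par Emp Sig) ∈ Ax₁ → CoWEq Ax₂ f g)
    {X Y : Ty} {f g : CoTm Ty Par Emp Sig X Y} (h : CoWEq Ax₁ f g) : CoWEq Ax₂ f g := by
  exact CoWEq.rec (motive_1 := fun {X Y} f g _ => CoSEq Ax₂ f g)
    (motive_2 := fun {X Y} f g _ => CoWEq Ax₂ f g)
    (@fun _ _ _ _ a => hS a)
    (@fun _ _ f => CoSEq.refl f)
    (@fun _ _ _ _ _ ih => ih.symm)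
    (@fun _ _ _ _ _ _ _ ih1 ih2 => ih1.trans ih2)
    (@fun _ _ _ u _ _ _ ih => CoSEq.subs u ih)
    (@fun _ _ _ _ _ w _ ih => CoSEq.repl w ih)
    (@fun _ _ f => CoSEq.idLeft f)
    (@fun _ _ f => CoSEq.idRight f)
    (@fun _ _ _ _ h3 g3 f3 => CoSEq.assoc h3 g3 f3)
    (@fun _ _ a => CoSEq.initialPure a)
    (@fun _ _ _ _ hf hg _ ih => CoSEq.eq₁ hf hg ih)
    (@fun _ _ _ _ _ _ ihw ihs => CoSEq.eq₂ ihw ihs)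
    (@fun _ _ _ _ ih => CoSEq.eq₃ ih)
    (@fun _ _ _ _ a => hW a)
    (@fun _ _ _ _ _ ih => ih.symm)
    (@fun _ _ _ _ _ _ _ ih1 ih2 => ih1.trans ih2)
    (@fun _ _ _ _ _ _ hu _ ih => CoWEq.subsPure hu ih)
    (@fun _ _ _ _ _ w _ ih => CoWEq.repl w ih)
    (@fun _ f => CoWEq.empty f)
    (@fun _ _ _ _ _ ih => CoWEq.ofStrong ih)
    CoWEq.untag_tag
    h

theorem coequiv_of {Ax E₁ E₂ : Set (CoEqn Ty Par Emp Sig)}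
    (h1S : ∀ {X Y : Ty} {f g : CoTm Ty Par Emp Sig X Y},
      (⟨X, Y, (f, g), true⟩ : CoEqn Ty Par Emp Sig) ∈ E₁ → CoSEq (Ax ∪ E₂) f g)
    (h1W : ∀ {X Y : Ty} {f g : CoTm Ty Par Emp Sig X Y},
      (⟨X, Y, (f, g), false⟩ : CoEqn Ty Par Emp Sig) ∈ E₁ → CoWEq (Ax ∪ E₂) f g)
    (h2S : ∀ {X Y : Ty} {f g : CoTm Ty Par Emp Sig X Y},
      (⟨X, Y, (f, g), true⟩ : CoEqn Ty Par Emp Sig) ∈ E₂ → CoSEq (Ax ∪ E₁) f g)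
    (h2W : ∀ {X Y : Ty} {f g : CoTm Ty Par Emp Sig X Y},
      (⟨X, Y, (f, g), false⟩ : CoEqn Ty Par Emp Sig) ∈ E₂ → CoWEq (Ax ∪ E₁) f g) :
    CoEquiv Ax E₁ E₂ := by
  have hS12 : ∀ {X Y : Ty} {f g : CoTm Ty Par Emp Sig X Y},
      (⟨X, Y, (f, g), true⟩ : CoEqn Ty Par Emp Sig) ∈ Ax ∪ E₁ → CoSEq (Ax ∪ E₂) f g := by
    intro X Y f g hm
    rcases hm with hm | hm
    · exact CoSEq.ax (Set.mem_union_left _ hm)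
    · exact h1S hm
  have hW12 : ∀ {X Y : Ty} {f g : CoTm Ty Par Emp Sig X Y},
      (⟨X, Y, (f, g), false⟩ : CoEqn Ty Par Emp Sig) ∈ Ax ∪ E₁ → CoWEq (Ax ∪ E₂) f g := by
    intro X Y f g hm
    rcases hm with hm | hm
    · exact CoWEq.ax (Set.mem_union_left _ hm)
    · exact h1W hm
  have hS21 : ∀ {X Y : Ty} {f g : CoTm Ty Par Emp Sig X Y},
      (⟨X, Y, (f, g), true⟩ : CoEqn Ty Par Emp Sig) ∈ Ax ∪ E₂ → CoSEq (Ax ∪ E₁) f g := by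
    intro X Y f g hm
    rcases hm with hm | hm
    · exact CoSEq.ax (Set.mem_union_left _ hm)
    · exact h2S hm
  have hW21 : ∀ {X Y : Ty} {f g : CoTm Ty Par Emp Sig X Y},
      (⟨X, Y, (f, g), false⟩ : CoEqn Ty Par Emp Sig) ∈ Ax ∪ E₂ → CoWEq (Ax ∪ E₁) f g := by
    intro X Y f g hm
    rcases hm with hm | hm
    · exact CoWEq.ax (Set.mem_union_left _ hm)
    · exact h2W hm
  intro X Y f g
  exact ⟨⟨coSEq_mono hS12 hW12, coSEq_mono hS21 hW21⟩,
         ⟨coWEq_mono hS12 hW12, coWEq_mono hS21 hW21⟩⟩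

/-- `a ∘ untag ∘ tag ∘ u ∼ a ∘ u` for pure `u`. -/
theorem wk_reduce {A : Set (CoEqn Ty Par Emp Sig)} {X Y : Ty}
    (a : CoTm Ty Par Emp Sig Par Y) (u : CoTm Ty Par Emp Sig X Par) (hu : CoPure u) :
    CoWEq A (a.comp (CoTm.untag.comp (CoTm.tag.comp u))) (a.comp u) := by
  have h1 : CoSEq A (a.comp (CoTm.untag.comp (CoTm.tag.comp u)))
      ((a.comp (CoTm.untag.comp CoTm.tag)).comp u) :=
    ((CoSEq.assoc a (CoTm.untag.comp CoTm.tag) u).trans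
      (CoSEq.repl a (CoSEq.assoc CoTm.untag CoTm.tag u))).symm
  have h3 : CoWEq A ((a.comp (CoTm.untag.comp CoTm.tag)).comp u)
      ((a.comp (CoTm.id Par)).comp u) :=
    CoWEq.subsPure hu (CoWEq.repl a CoWEq.untag_tag)
  have h4 : CoSEq A ((a.comp (CoTm.id Par)).comp u) (a.comp u) :=
    CoSEq.subs u (CoSEq.idRight a)
  exact (CoWEq.ofStrong h1).trans (h3.trans (CoWEq.ofStrong h4))

/-- Every propagator `Emp → Emp` is strongly equal to the identity. -/
theorem ppg_empty_id {A : Set (CoEqn Ty Par Emp Sig)} {p : CoTm Ty Par Emp Sig Emp Emp}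
    (hp : CoPpg p) : CoSEq A p (CoTm.id Emp) :=
  CoSEq.eq₁ hp (CoPpg.id Emp)
    ((CoWEq.empty p).trans (CoWEq.symm (CoWEq.empty (CoTm.id Emp))))

/-- `(a ∘ untag ∘ tag ∘ u) ∘ []_X ≡ a ∘ untag`. -/
theorem comp_empty_reduce {A : Set (CoEqn Ty Par Emp Sig)} {X Y : Ty}
    (a : CoTm Ty Par Emp Sig Par Y) (u : CoTm Ty Par Emp Sig X Par) (hu : CoPure u) :
    CoSEq A ((a.comp (CoTm.untag.comp (CoTm.tag.comp u))).comp (CoTm.fromEmpty X))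
      (a.comp CoTm.untag) := by
  have s4 : CoSEq A (CoTm.tag.comp (u.comp (CoTm.fromEmpty X))) (CoTm.id Emp) :=
    ppg_empty_id (CoPpg.comp CoPpg.tag (CoPpg.comp (pure_ppg hu) (CoPpg.fromEmpty X)))
  have t : CoSEq A ((CoTm.untag.comp (CoTm.tag.comp u)).comp (CoTm.fromEmpty X))
      (CoTm.untag (Sig := Sig)) :=
    (CoSEq.assoc CoTm.untag (CoTm.tag.comp u) (CoTm.fromEmpty X)).trans
      ((CoSEq.repl CoTm.untag ((CoSEq.assoc CoTm.tag u (CoTm.fromEmpty X)).trans s4)).trans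
        (CoSEq.idRight CoTm.untag))
  exact (CoSEq.assoc a (CoTm.untag.comp (CoTm.tag.comp u)) (CoTm.fromEmpty X)).trans
    (CoSEq.repl a t)


/-- In `L_excore`, for propagators `a₁ a₂ : P → Y`, pure `u₁ u₂ : X → P`,
and the catchers `fᵢ = aᵢ ∘ untag ∘ tag ∘ uᵢ : X → Y`: the weak equation `f₁ ∼ f₂` is
`T_excore`-equivalent to `a₁ ∘ u₁ ≡ a₂ ∘ u₂`, and the strong equation `f₁ ≡ f₂` is
`T_excore`-equivalent to the pair `{a₁ ≡ a₂, a₁ ∘ u₁ ≡ a₂ ∘ u₂}`. -/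
theorem coexc_catcher_eqns (Ax : Set (CoEqn Ty Par Emp Sig)) (hAx : CoPureAx Ax)
    {X Y : Ty} (a₁ a₂ : CoTm Ty Par Emp Sig Par Y) (u₁ u₂ : CoTm Ty Par Emp Sig X Par)
    (ha₁ : CoPpg a₁) (ha₂ : CoPpg a₂) (hu₁ : CoPure u₁) (hu₂ : CoPure u₂) :
    CoEquiv Ax
      {(⟨X, Y, (a₁.comp (CoTm.untag.comp (CoTm.tag.comp u₁)),
                a₂.comp (CoTm.untag.comp (CoTm.tag.comp u₂))), false⟩ : CoEqn Ty Par Emp Sig)}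
      {(⟨X, Y, (a₁.comp u₁, a₂.comp u₂), true⟩ : CoEqn Ty Par Emp Sig)} ∧
    CoEquiv Ax
      {(⟨X, Y, (a₁.comp (CoTm.untag.comp (CoTm.tag.comp u₁)),
                a₂.comp (CoTm.untag.comp (CoTm.tag.comp u₂))), true⟩ : CoEqn Ty Par Emp Sig)}
      ({(⟨Par, Y, (a₁, a₂), true⟩ : CoEqn Ty Par Emp Sig)} ∪
       {(⟨X, Y, (a₁.comp u₁, a₂.comp u₂), true⟩ : CoEqn Ty Par Emp Sig)}) := by
  constructor
  · -- Part 1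
    refine coequiv_of ?_ ?_ ?_ ?_
    · -- no strong axiom in E₁
      intro X' Y' f g hm
      exact coeqn_eq_elim
        (C := @fun _ _ p b => b = true →
          CoSEq (Ax ∪ {(⟨X, Y, (a₁.comp u₁, a₂.comp u₂), true⟩ : CoEqn Ty Par Emp Sig)})
            p.1 p.2) hm (fun hb => Bool.noConfusion hb) rfl
    · -- f₁ ∼ f₂ over Ax ∪ E₂
      intro X' Y' f g hm
      refine coeqn_eq_elim
        (C := @fun _ _ p _ =>
          CoWEq (Ax ∪ {(⟨X, Y, (a₁.comp u₁, a₂.comp u₂), true⟩ : CoEqn Ty Par Emp Sig)})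
            p.1 p.2) hm ?_
      have hau : CoSEq (Ax ∪ {(⟨X, Y, (a₁.comp u₁, a₂.comp u₂), true⟩ : CoEqn Ty Par Emp Sig)})
          (a₁.comp u₁) (a₂.comp u₂) := CoSEq.ax (Set.mem_union_right _ rfl)
      exact (wk_reduce a₁ u₁ hu₁).trans
        ((CoWEq.ofStrong hau).trans (wk_reduce a₂ u₂ hu₂).symm)
    · -- a₁∘u₁ ≡ a₂∘u₂ over Ax ∪ E₁
      intro X' Y' f g hm
      refine coeqn_eq_elim
        (C := @fun _ _ p _ =>
          CoSEq (Ax ∪ {(⟨X, Y, (a₁.comp (CoTm.untag.comp (CoTm.tag.comp u₁)),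
                a₂.comp (CoTm.untag.comp (CoTm.tag.comp u₂))), false⟩ : CoEqn Ty Par Emp Sig)})
            p.1 p.2) hm ?_
      have hw : CoWEq (Ax ∪ {(⟨X, Y, (a₁.comp (CoTm.untag.comp (CoTm.tag.comp u₁)),
                a₂.comp (CoTm.untag.comp (CoTm.tag.comp u₂))), false⟩ : CoEqn Ty Par Emp Sig)})
          (a₁.comp (CoTm.untag.comp (CoTm.tag.comp u₁)))
          (a₂.comp (CoTm.untag.comp (CoTm.tag.comp u₂))) :=
        CoWEq.ax (Set.mem_union_right _ rfl)
      exact CoSEq.eq₁ (CoPpg.comp ha₁ (pure_ppg hu₁)) (CoPpg.comp ha₂ (pure_ppg hu₂))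
        (((wk_reduce a₁ u₁ hu₁).symm.trans hw).trans (wk_reduce a₂ u₂ hu₂))
    · -- no weak axiom in E₂
      intro X' Y' f g hm
      exact coeqn_eq_elim
        (C := @fun _ _ p b => b = false →
          CoWEq (Ax ∪ {(⟨X, Y, (a₁.comp (CoTm.untag.comp (CoTm.tag.comp u₁)),
                a₂.comp (CoTm.untag.comp (CoTm.tag.comp u₂))), false⟩ : CoEqn Ty Par Emp Sig)})
            p.1 p.2) hm (fun hb => Bool.noConfusion hb) rfl
  · -- Part 2
    refine coequiv_of ?_ ?_ ?_ ?_
    · -- f₁ ≡ f₂ over Ax ∪ E₂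
      intro X' Y' f g hm
      refine coeqn_eq_elim
        (C := @fun _ _ p _ =>
          CoSEq (Ax ∪ ({(⟨Par, Y, (a₁, a₂), true⟩ : CoEqn Ty Par Emp Sig)} ∪
            {(⟨X, Y, (a₁.comp u₁, a₂.comp u₂), true⟩ : CoEqn Ty Par Emp Sig)}))
            p.1 p.2) hm ?_
      have haa : CoSEq (Ax ∪ ({(⟨Par, Y, (a₁, a₂), true⟩ : CoEqn Ty Par Emp Sig)} ∪
            {(⟨X, Y, (a₁.comp u₁, a₂.comp u₂), true⟩ : CoEqn Ty Par Emp Sig)})) a₁ a₂ :=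
        CoSEq.ax (Set.mem_union_right _ (Set.mem_union_left _ rfl))
      have hau : CoSEq (Ax ∪ ({(⟨Par, Y, (a₁, a₂), true⟩ : CoEqn Ty Par Emp Sig)} ∪
            {(⟨X, Y, (a₁.comp u₁, a₂.comp u₂), true⟩ : CoEqn Ty Par Emp Sig)}))
          (a₁.comp u₁) (a₂.comp u₂) :=
        CoSEq.ax (Set.mem_union_right _ (Set.mem_union_right _ rfl))
      exact CoSEq.eq₂
        ((wk_reduce a₁ u₁ hu₁).trans
          ((CoWEq.ofStrong hau).trans (wk_reduce a₂ u₂ hu₂).symm))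
        ((comp_empty_reduce a₁ u₁ hu₁).trans
          ((CoSEq.subs CoTm.untag haa).trans (comp_empty_reduce a₂ u₂ hu₂).symm))
    · -- no weak axiom in E₁
      intro X' Y' f g hm
      exact coeqn_eq_elim
        (C := @fun _ _ p b => b = false →
          CoWEq (Ax ∪ ({(⟨Par, Y, (a₁, a₂), true⟩ : CoEqn Ty Par Emp Sig)} ∪
            {(⟨X, Y, (a₁.comp u₁, a₂.comp u₂), true⟩ : CoEqn Ty Par Emp Sig)}))
            p.1 p.2) hm (fun hb => Bool.noConfusion hb) rfl
    · -- both strong axioms of E₂ over Ax ∪ E₁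
      intro X' Y' f g hm
      have hf : CoSEq (Ax ∪ {(⟨X, Y, (a₁.comp (CoTm.untag.comp (CoTm.tag.comp u₁)),
                a₂.comp (CoTm.untag.comp (CoTm.tag.comp u₂))), true⟩ : CoEqn Ty Par Emp Sig)})
          (a₁.comp (CoTm.untag.comp (CoTm.tag.comp u₁)))
          (a₂.comp (CoTm.untag.comp (CoTm.tag.comp u₂))) :=
        CoSEq.ax (Set.mem_union_right _ rfl)
      rcases hm with hm | hm
      · -- a₁ ≡ a₂
        refine coeqn_eq_elim
          (C := @fun _ _ p _ =>
            CoSEq (Ax ∪ {(⟨X, Y, (a₁.comp (CoTm.untag.comp (CoTm.tag.comp u₁)),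
                  a₂.comp (CoTm.untag.comp (CoTm.tag.comp u₂))), true⟩ : CoEqn Ty Par Emp Sig)})
              p.1 p.2) hm ?_
        have hue : CoSEq (Ax ∪ {(⟨X, Y, (a₁.comp (CoTm.untag.comp (CoTm.tag.comp u₁)),
                  a₂.comp (CoTm.untag.comp (CoTm.tag.comp u₂))), true⟩ : CoEqn Ty Par Emp Sig)})
            (a₁.comp CoTm.untag) (a₂.comp CoTm.untag) :=
          (comp_empty_reduce a₁ u₁ hu₁).symm.trans
            ((CoSEq.subs (CoTm.fromEmpty X) hf).trans (comp_empty_reduce a₂ u₂ hu₂))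
        have w1 := ((CoWEq.repl (Ax := (Ax ∪ {(⟨X, Y,
              (a₁.comp (CoTm.untag.comp (CoTm.tag.comp u₁)),
               a₂.comp (CoTm.untag.comp (CoTm.tag.comp u₂))), true⟩ : CoEqn Ty Par Emp Sig)}))
            a₁ CoWEq.untag_tag).trans (CoWEq.ofStrong (CoSEq.idRight a₁))).symm
        have w2 := ((CoWEq.repl (Ax := (Ax ∪ {(⟨X, Y,
              (a₁.comp (CoTm.untag.comp (CoTm.tag.comp u₁)),
               a₂.comp (CoTm.untag.comp (CoTm.tag.comp u₂))), true⟩ : CoEqn Ty Par Emp Sig)}))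
            a₂ CoWEq.untag_tag).trans (CoWEq.ofStrong (CoSEq.idRight a₂))).symm
        exact CoSEq.eq₁ ha₁ ha₂
          (w1.trans ((CoWEq.ofStrong ((CoSEq.assoc a₁ CoTm.untag CoTm.tag).symm.trans
            ((CoSEq.subs CoTm.tag hue).trans (CoSEq.assoc a₂ CoTm.untag CoTm.tag)))).trans
            w2.symm))
      · -- a₁∘u₁ ≡ a₂∘u₂
        refine coeqn_eq_elim
          (C := @fun _ _ p _ =>
            CoSEq (Ax ∪ {(⟨X, Y, (a₁.comp (CoTm.untag.comp (CoTm.tag.comp u₁)),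
                  a₂.comp (CoTm.untag.comp (CoTm.tag.comp u₂))), true⟩ : CoEqn Ty Par Emp Sig)})
              p.1 p.2) hm ?_
        exact CoSEq.eq₁ (CoPpg.comp ha₁ (pure_ppg hu₁)) (CoPpg.comp ha₂ (pure_ppg hu₂))
          (((wk_reduce a₁ u₁ hu₁).symm.trans (CoWEq.ofStrong hf)).trans
            (wk_reduce a₂ u₂ hu₂))
    · -- no weak axiom in E₂
      intro X' Y' f g hm
      rcases hm with hm | hm <;>
        exact coeqn_eq_elim
          (C := @fun _ _ p b => b = false →
            CoWEq (Ax ∪ {(⟨X, Y, (a₁.comp (CoTm.untag.comp (CoTm.tag.comp u₁)),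
                  a₂.comp (CoTm.untag.comp (CoTm.tag.comp u₂))), true⟩ : CoEqn Ty Par Emp Sig)})
              p.1 p.2) hm (fun hb => Bool.noConfusion hb) rfl
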